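/- arXiv:1611.00563 — 2 statements merged into one kernel-verified Lean document; each statement's English description precedes it below -/
import Mathlib

section
/- Let p > 1 and let α, β satisfy (p-1)/p ≤ α < β < 1. Define λ_α = (p-1)α^{p-1}(1-α), λ_β = (p-1)β^{p-1}(1-β), and A = (p-2)·λ_α·(β/α) + λ_β·(α/β)^{p-2}. Then A < (p-1)·λ_α. -/
open Real

/-!
Both sides carry the factor `(p-1)α^(p-2)`; after removing it the claim becomes the quadratic
inequality `(p-2)(1-α)β + β(1-β) < (p-1)α(1-α)` in `β`. The difference of the two sides factors as
`(β - α)(β - (p-1)(1-α))`, and `(p-1)/p ≤ α` says exactly that `(p-1)(1-α) ≤ α < β`.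
-/

lemma quadratic_lt_of_lt {p α β : ℝ} (hαβ : α < β) (hβ : (p - 1) * (1 - α) < β) :
    (p - 2) * (1 - α) * β + β * (1 - β) < (p - 1) * α * (1 - α) := by
  linear_combination mul_pos (sub_pos.2 hαβ) (sub_pos.2 hβ)

lemma rpow_sub_one_eq_rpow_sub_two_mul {α : ℝ} (hα : 0 < α) (p : ℝ) :
    α ^ (p - 1) = α ^ (p - 2) * α := by
  rw [show p - 1 = (p - 2) + 1 by ring, rpow_add_one hα.ne']

lemma weighted_lambda_sum_eq {α β : ℝ} (hα : 0 < α) (hβ : 0 < β) (p : ℝ) :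
    (p - 2) * ((p - 1) * α ^ (p - 1) * (1 - α)) * (β / α)
      + ((p - 1) * β ^ (p - 1) * (1 - β)) * (α / β) ^ (p - 2)
      = (p - 1) * α ^ (p - 2) * ((p - 2) * (1 - α) * β + β * (1 - β)) := by
  rw [rpow_sub_one_eq_rpow_sub_two_mul hα, rpow_sub_one_eq_rpow_sub_two_mul hβ,
    div_rpow hα.le hβ.le]
  have : β ^ (p - 2) ≠ 0 := (rpow_pos_of_pos hβ _).ne'
  field_simp

theorem stmt2_general (p α β : ℝ) (hp : 1 < p) (hα : (p - 1) / p ≤ α) (hαβ : α < β) :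
    (p - 2) * ((p - 1) * α ^ (p - 1) * (1 - α)) * (β / α)
      + ((p - 1) * β ^ (p - 1) * (1 - β)) * (α / β) ^ (p - 2)
      < (p - 1) * ((p - 1) * α ^ (p - 1) * (1 - α)) := by
  have hp0 : 0 < p := by linarith
  have hα0 : 0 < α := (div_pos (by linarith) hp0).trans_le hα
  have hβ0 : 0 < β := hα0.trans hαβ
  have hcrit : (p - 1) * (1 - α) ≤ α := by
    rw [div_le_iff₀ hp0] at hα
    linarith
  rw [weighted_lambda_sum_eq hα0 hβ0, rpow_sub_one_eq_rpow_sub_two_mul hα0,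
    show (p - 1) * ((p - 1) * (α ^ (p - 2) * α) * (1 - α))
      = (p - 1) * α ^ (p - 2) * ((p - 1) * α * (1 - α)) by ring]
  have hfactor : 0 < (p - 1) * α ^ (p - 2) := mul_pos (by linarith) (rpow_pos_of_pos hα0 _)
  exact mul_lt_mul_of_pos_left (quadratic_lt_of_lt hαβ (hcrit.trans_lt hαβ)) hfactor

/-- For `p > 1` and `(p-1)/p ≤ α < β < 1`, with `λ_α = (p-1)α^(p-1)(1-α)`,
`λ_β = (p-1)β^(p-1)(1-β)` and `A = (p-2)·λ_α·(β/α) + λ_β·(α/β)^(p-2)`, one has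
`A < (p-1)·λ_α`. -/
theorem stmt2 (p α β : ℝ) (hp : 1 < p) (hα : (p - 1) / p ≤ α) (hαβ : α < β) (hβ : β < 1) :
    (p - 2) * ((p - 1) * α ^ (p - 1) * (1 - α)) * (β / α)
      + ((p - 1) * β ^ (p - 1) * (1 - β)) * (α / β) ^ (p - 2)
      < (p - 1) * ((p - 1) * α ^ (p - 1) * (1 - α)) :=
  stmt2_general p α β hp hα hαβ
end

section
/- Let U ⊂ ℝⁿ be open and G : U → (0,∞) be a positive C² p-harmonic function (Δ_p G = 0). Then for every α ∈ (0,1), the function G^α satisfies -Δ_p(G^α) = λ_α · |∇G/G|^p · (G^α)^{p-1} in U, where λ_α = (p-1)α^{p-1}(1-α). -/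
open Real

/-- The vector field `|∇u|^{p-2}∇u` entering the p-Laplacian. -/
noncomputable def pLapVF (n : ℕ) (p : ℝ) (u : EuclideanSpace ℝ (Fin n) → ℝ)
    (x : EuclideanSpace ℝ (Fin n)) : EuclideanSpace ℝ (Fin n) :=
  ‖gradient u x‖ ^ (p - 2) • gradient u x

/-- The (pointwise) p-Laplacian `Δ_p u = div(|∇u|^{p-2}∇u)`. -/
noncomputable def pLap (n : ℕ) (p : ℝ) (u : EuclideanSpace ℝ (Fin n) → ℝ)
    (x : EuclideanSpace ℝ (Fin n)) : ℝ :=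
  ∑ i : Fin n, fderiv ℝ (pLapVF n p u) x (EuclideanSpace.single i 1) i

/-!
Since `∇(G^α) = α G^{α-1} ∇G` with a positive factor, the p-Laplacian vector field of `G^α` is
`c |∇G|^{p-2}∇G` with `c = (α G^{α-1})^{p-1} = α^{p-1} G^{(α-1)(p-1)}`. The product rule for the
divergence gives `Δ_p(G^α) = c Δ_p G + ⟨∇c, |∇G|^{p-2}∇G⟩`; the first term vanishes by
p-harmonicity and the second is `α^{p-1}(α-1)(p-1) G^{(α-1)(p-1)-1} |∇G|^p`.
-/

open Topology InnerProductSpace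

theorem differentiableAt_smul_iff_of_ne_zero {E F : Type*} [NormedAddCommGroup E]
    [NormedSpace ℝ E] [NormedAddCommGroup F] [NormedSpace ℝ F] {c : E → ℝ} {V : E → F} {x : E}
    (hc : DifferentiableAt ℝ c x) (hcx : c x ≠ 0) :
    DifferentiableAt ℝ (fun y => c y • V y) x ↔ DifferentiableAt ℝ V x := by
  refine ⟨fun h => ?_, hc.smul⟩
  refine ((hc.inv hcx).smul h).congr_of_eventuallyEq ?_
  filter_upwards [hc.continuousAt.eventually_ne hcx] with y hy
  simp [smul_smul, hy]

section Divergence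

variable {n : ℕ}

noncomputable def divergence (V : EuclideanSpace ℝ (Fin n) → EuclideanSpace ℝ (Fin n))
    (x : EuclideanSpace ℝ (Fin n)) : ℝ :=
  ∑ i, fderiv ℝ V x (EuclideanSpace.single i 1) i

theorem pLap_eq_divergence (p : ℝ) (u : EuclideanSpace ℝ (Fin n) → ℝ)
    (x : EuclideanSpace ℝ (Fin n)) : pLap n p u x = divergence (pLapVF n p u) x :=
  rfl

theorem Filter.EventuallyEq.divergence_eq
    {V W : EuclideanSpace ℝ (Fin n) → EuclideanSpace ℝ (Fin n)} {x : EuclideanSpace ℝ (Fin n)}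
    (h : V =ᶠ[𝓝 x] W) : divergence V x = divergence W x := by
  simp only [divergence, h.fderiv_eq]

theorem EuclideanSpace.sum_apply_single_mul (L : EuclideanSpace ℝ (Fin n) →L[ℝ] ℝ)
    (v : EuclideanSpace ℝ (Fin n)) : ∑ i, L (EuclideanSpace.single i 1) * v i = L v := by
  conv_rhs => rw [← (EuclideanSpace.basisFun (Fin n) ℝ).sum_repr v]
  simp [mul_comm]

theorem divergence_smul {c : EuclideanSpace ℝ (Fin n) → ℝ}
    {V : EuclideanSpace ℝ (Fin n) → EuclideanSpace ℝ (Fin n)} {x : EuclideanSpace ℝ (Fin n)}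
    (hc : DifferentiableAt ℝ c x) (hV : DifferentiableAt ℝ V x) :
    divergence (fun y => c y • V y) x = c x * divergence V x + fderiv ℝ c x (V x) := by
  simp only [divergence, fderiv_fun_smul hc hV, add_apply, smul_apply,
    ContinuousLinearMap.smulRight_apply, PiLp.add_apply, PiLp.smul_apply, smul_eq_mul,
    Finset.sum_add_distrib, ← Finset.mul_sum, EuclideanSpace.sum_apply_single_mul]

theorem divergence_smul_of_ne_zero {c : EuclideanSpace ℝ (Fin n) → ℝ}
    {V : EuclideanSpace ℝ (Fin n) → EuclideanSpace ℝ (Fin n)} {x : EuclideanSpace ℝ (Fin n)}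
    (hc : DifferentiableAt ℝ c x) (hcx : c x ≠ 0) (hV : DifferentiableAt ℝ V x ∨ V x = 0) :
    divergence (fun y => c y • V y) x = c x * divergence V x + fderiv ℝ c x (V x) := by
  by_cases hVd : DifferentiableAt ℝ V x
  · exact divergence_smul hc hVd
  · have hcVd : ¬DifferentiableAt ℝ (fun y => c y • V y) x := by
      rwa [differentiableAt_smul_iff_of_ne_zero hc hcx]
    simp [divergence, fderiv_zero_of_not_differentiableAt hVd,
      fderiv_zero_of_not_differentiableAt hcVd, hV.resolve_left hVd]

end Divergence

section Gradient

variable {F : Type*} [NormedAddCommGroup F] [InnerProductSpace ℝ F] [CompleteSpace F]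

theorem gradient_rpow_const {u : F → ℝ} {x : F} (hu : DifferentiableAt ℝ u x) (hx : u x ≠ 0)
    (α : ℝ) : gradient (fun y => u y ^ α) x = (α * u x ^ (α - 1)) • gradient u x := by
  rw [gradient, (hu.hasFDerivAt.rpow_const (Or.inl hx)).fderiv, map_smul, gradient]

theorem ContDiffAt.differentiableAt_gradient {u : F → ℝ} {x : F} (hu : ContDiffAt ℝ 2 u x) :
    DifferentiableAt ℝ (gradient u) x :=
  (toDual ℝ F).symm.toContinuousLinearEquiv.comp_differentiableAt_iff.mpr
    ((hu.fderiv_right (m := 1) (by norm_num)).differentiableAt one_ne_zero)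

end Gradient

section PLaplacian

variable {n : ℕ} {p : ℝ}

theorem pLapVF_of_gradient_eq_smul {u v : EuclideanSpace ℝ (Fin n) → ℝ}
    {x : EuclideanSpace ℝ (Fin n)} {s : ℝ} (hs : 0 < s) (h : gradient v x = s • gradient u x) :
    pLapVF n p v x = s ^ (p - 1) • pLapVF n p u x := by
  rw [pLapVF, pLapVF, h, norm_smul, norm_of_nonneg hs.le, mul_rpow hs.le (norm_nonneg _),
    smul_smul, smul_smul, mul_right_comm, ← rpow_add_one hs.ne']
  ring_nf

theorem fderiv_apply_pLapVF_self (hp : p ≠ 0) (u : EuclideanSpace ℝ (Fin n) → ℝ)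
    (x : EuclideanSpace ℝ (Fin n)) : fderiv ℝ u x (pLapVF n p u x) = ‖gradient u x‖ ^ p := by
  rw [← inner_gradient_left, pLapVF, inner_smul_right, real_inner_self_eq_norm_sq]
  rcases (norm_nonneg (gradient u x)).eq_or_lt with h | h
  · simp [← h, zero_rpow hp]
  · rw [← rpow_natCast, ← rpow_add h]
    norm_num

theorem differentiableAt_pLapVF {u : EuclideanSpace ℝ (Fin n) → ℝ}
    {x : EuclideanSpace ℝ (Fin n)} (hu : ContDiffAt ℝ 2 u x) (hx : gradient u x ≠ 0) :
    DifferentiableAt ℝ (pLapVF n p u) x := by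
  have hφ : DifferentiableAt ℝ (fun v : EuclideanSpace ℝ (Fin n) => ‖v‖ ^ (p - 2) • v)
      (gradient u x) :=
    ((differentiableAt_id.norm ℝ hx).rpow_const (Or.inl (norm_ne_zero_iff.mpr hx))).smul
      differentiableAt_id
  exact hφ.comp x hu.differentiableAt_gradient

theorem pLap_rpow_const (hp : p ≠ 0) {α : ℝ} (hα : 0 < α) {G : EuclideanSpace ℝ (Fin n) → ℝ}
    {x : EuclideanSpace ℝ (Fin n)} (hG : ContDiffAt ℝ 2 G x) (hGx : 0 < G x) :
    pLap n p (fun y => G y ^ α) x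
      = α ^ (p - 1) * G x ^ ((α - 1) * (p - 1)) * pLap n p G x
        + α ^ (p - 1) * ((α - 1) * (p - 1)) * G x ^ ((α - 1) * (p - 1) - 1)
          * ‖gradient G x‖ ^ p := by
  set β := (α - 1) * (p - 1)
  set c := fun y => α ^ (p - 1) * G y ^ β
  have hVF : pLapVF n p (fun y => G y ^ α) =ᶠ[𝓝 x] fun y => c y • pLapVF n p G y := by
    filter_upwards [hG.eventually (by simp), continuousAt_const.eventually_lt hG.continuousAt hGx]
      with y hGy hy
    rw [pLapVF_of_gradient_eq_smul (by positivity)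
      (gradient_rpow_const (hGy.differentiableAt (by norm_num)) hy.ne' α),
      mul_rpow hα.le (by positivity), ← rpow_mul hy.le]
  have hc : HasFDerivAt c ((α ^ (p - 1) * (β * G x ^ (β - 1))) • fderiv ℝ G x) x := by
    simpa only [smul_smul] using
      ((hG.differentiableAt (by norm_num)).hasFDerivAt.rpow_const (p := β)
        (Or.inl hGx.ne')).const_mul (α ^ (p - 1))
  -- At a critical point `|∇G|^{p-2}∇G` need not be differentiable (`p < 2`), but it vanishes.
  have hV : DifferentiableAt ℝ (pLapVF n p G) x ∨ pLapVF n p G x = 0 := by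
    by_cases h : gradient G x = 0
    · simp [pLapVF, h]
    · exact .inl (differentiableAt_pLapVF hG h)
  rw [pLap_eq_divergence, hVF.divergence_eq,
    divergence_smul_of_ne_zero hc.differentiableAt (by positivity) hV, hc.fderiv,
    smul_apply, fderiv_apply_pLapVF_self hp, ← pLap_eq_divergence, smul_eq_mul]
  ring

end PLaplacian

/-- If `G > 0` is a C² p-harmonic function on an open set `U`, then for every `α ∈ (0,1)`
the function `G^α` satisfies `-Δ_p(G^α) = λ_α·|∇G/G|^p·(G^α)^{p-1}` in `U`, where
`λ_α = (p-1)α^(p-1)(1-α)`. -/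
theorem stmt7 (n : ℕ) (p : ℝ) (hp : 1 < p) (U : Set (EuclideanSpace ℝ (Fin n)))
    (hU : IsOpen U) (G : EuclideanSpace ℝ (Fin n) → ℝ) (hG : ContDiffOn ℝ 2 G U)
    (hGpos : ∀ x ∈ U, 0 < G x) (hGharm : ∀ x ∈ U, pLap n p G x = 0)
    (α : ℝ) (hα : α ∈ Set.Ioo (0 : ℝ) 1) :
    ∀ x ∈ U, -pLap n p (fun y => G y ^ α) x
      = ((p - 1) * α ^ (p - 1) * (1 - α)) * (‖gradient G x‖ / G x) ^ p *
          (G x ^ α) ^ (p - 1) := by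
  intro x hx
  have hGx := hGpos x hx
  have hexp : G x ^ ((α - 1) * (p - 1) - 1) = G x ^ (α * (p - 1)) / G x ^ p := by
    rw [← rpow_sub hGx]
    ring_nf
  rw [pLap_rpow_const (by linarith) hα.1 (hG.contDiffAt (hU.mem_nhds hx)) hGx, hGharm x hx,
    hexp, div_rpow (norm_nonneg _) hGx.le, ← rpow_mul hGx.le]
  field_simp
  ring
end
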